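/- (Fundamental Inequality, upper bound.) Let X be a finite n-dimensional simplicial complex satisfying condition (1_X), let 1 ≤ i ≤ n−1, and let λ > 0 be a real number such that (Δ_u g, g)_u ≤ λ·(g, g)_u for every vertex u of X and every g ∈ C^{i−1}(Lk(u)). Then for every f ∈ C^i(X), i·(Δf, f) ≤ ((i+1)·λ − (n−i))·(f, f); in particular, every eigenvalue c of Δ acting on C^i(X) satisfies i·c ≤ (i+1)·λ − (n−i). -/

import Mathlib

/-!
For a cochain `f ∈ C^i(X)` and a vertex `u`, let `τ_u f ∈ C^{i-1}(Lk u)` be `s ↦ f([u,s])`.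
Every `i`-simplex has `i + 1` vertices, so `∑_u ‖τ_u f‖²_u = (i + 1)‖f‖²`. On the link,
`d_u(τ_u f)(v) = f(v) - (df)([u,v])`; expanding `(Δ_u τ_u f, τ_u f)_u = ‖d_u τ_u f‖²_u` and summing
over `u` produces `(n - i)‖f‖²` from the square of `f` (an `i`-simplex `s` lies in simplices
`s ∪ {x}` of total weight `∑_x w(s ∪ {x}) = (n - i) w(s)`), `-2 (Δf, f)` from the cross term, and
`(i + 2)(Δf, f)` from the square of `df`, because `‖df‖² = (Δf, f)` and `u` runs over the `i + 2`
vertices of each `(i+1)`-simplex. Hence `∑_u (Δ_u τ_u f, τ_u f)_u = (n - i)‖f‖² + i (Δf, f)`, and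
summing the local bounds `(Δ_u τ_u f, τ_u f)_u ≤ λ ‖τ_u f‖²_u` gives the inequality; an eigenvector
turns it into the bound on `c`.
-/

open Finset

open scoped Classical

variable {V : Type*}

/-- A (finite) simplicial complex on the vertex type `V`: a collection of nonempty
finite sets of vertices (the simplices) closed under passing to nonempty subsets. -/
def IsComplex [DecidableEq V] (K : Finset (Finset V)) : Prop :=
  (∀ s ∈ K, s.Nonempty) ∧ ∀ s ∈ K, ∀ t : Finset V, t ⊆ s → t.Nonempty → t ∈ K

/-- `K` is `n`-dimensional and satisfies condition `(1_X)`: every simplex has dimension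
at most `n` and is a face of some `n`-dimensional simplex (one of cardinality `n+1`). -/
def IsPureDim [DecidableEq V] (K : Finset (Finset V)) (n : ℕ) : Prop :=
  (∀ s ∈ K, s.card ≤ n + 1) ∧ ∀ s ∈ K, ∃ t ∈ K, s ⊆ t ∧ t.card = n + 1

/-- `wt K n s` : the number `w(s)` of `n`-dimensional simplices of `K` containing `s`. -/
noncomputable def wt [DecidableEq V] (K : Finset (Finset V)) (n : ℕ) (s : Finset V) : ℕ :=
  (K.filter fun t => s ⊆ t ∧ t.card = n + 1).card

/-- An `m`-tuple of vertices is allowed when its entries are distinct and form a simplex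
of `K`; i.e. it is an oriented `(m-1)`-simplex of `K`. -/
def Allowed [DecidableEq V] [Fintype V] (K : Finset (Finset V)) {m : ℕ}
    (v : Fin m → V) : Prop :=
  Function.Injective v ∧ Finset.image v Finset.univ ∈ K

/-- `f` is an `(m-1)`-cochain on `K`: a real-valued alternating function on oriented
`(m-1)`-simplices of `K` (realized as a function on all `m`-tuples of vertices which is
alternating and vanishes on tuples which are not oriented simplices of `K`). -/
def IsCochain [DecidableEq V] [Fintype V] (K : Finset (Finset V)) (m : ℕ)
    (f : (Fin m → V) → ℝ) : Prop :=
  (∀ (σ : Equiv.Perm (Fin m)) (v : Fin m → V),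
      f (v ∘ σ) = ((Equiv.Perm.sign σ : ℤ) : ℝ) * f v) ∧
  ∀ v : Fin m → V, ¬ Allowed K v → f v = 0

/-- The inner product `(f,g) = ∑_s w(s)·f(s)·g(s)` on `(m-1)`-cochains, the sum being over
the unoriented `(m-1)`-simplices `s` of `K` (each with an arbitrarily chosen orientation);
summing over all `m`-tuples counts each simplex `m!` times, whence the normalization. -/
noncomputable def innerC [DecidableEq V] [Fintype V] (K : Finset (Finset V)) (n m : ℕ)
    (f g : (Fin m → V) → ℝ) : ℝ :=
  (∑ v : Fin m → V, (wt K n (Finset.image v Finset.univ) : ℝ) * f v * g v) /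
    (Nat.factorial m : ℝ)

/-- The coboundary `d : C^{m-1}(K) → C^m(K)`. -/
noncomputable def cobound [DecidableEq V] [Fintype V] (K : Finset (Finset V)) {m : ℕ}
    (f : (Fin m → V) → ℝ) : (Fin (m + 1) → V) → ℝ :=
  fun v => if Allowed K v then
    ∑ j : Fin (m + 1), (-1 : ℝ) ^ (j : ℕ) * f (v ∘ Fin.succAbove j)
  else 0

/-- The operator `δ : C^m(K) → C^{m-1}(K)`,
`(δf)(s) = ∑_x (w([x,s])/w(s))·f([x,s])`, the sum being over the vertices `x`
such that `[x,s]` is an oriented simplex of `K`. -/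
noncomputable def codiff [DecidableEq V] [Fintype V] (K : Finset (Finset V)) (n : ℕ) {m : ℕ}
    (f : (Fin (m + 1) → V) → ℝ) : (Fin m → V) → ℝ :=
  fun s => ∑ x : V,
    if Allowed K (Fin.cons x s) then
      ((wt K n (Finset.image (Fin.cons x s) Finset.univ) : ℝ) /
          (wt K n (Finset.image s Finset.univ) : ℝ)) * f (Fin.cons x s)
    else 0

/-- The Laplace operator `Δ = δ ∘ d` on `(m-1)`-cochains. -/
noncomputable def lap [DecidableEq V] [Fintype V] (K : Finset (Finset V)) (n : ℕ) {m : ℕ}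
    (f : (Fin m → V) → ℝ) : (Fin m → V) → ℝ :=
  codiff K n (cobound K f)

/-- `ρ_v : C^{m-1}(K) → C^{m-1}(K)`: `(ρ_v f)(s) = f(s)` if `v` is a vertex of `s`,
and `0` otherwise. -/
noncomputable def rho [DecidableEq V] {m : ℕ} (v : V) (f : (Fin m → V) → ℝ) :
    (Fin m → V) → ℝ :=
  fun s => if ∃ j, s j = v then f s else 0

/-- The vertices of `K`. -/
noncomputable def verts [DecidableEq V] [Fintype V] (K : Finset (Finset V)) : Finset V :=
  Finset.univ.filter fun v => {v} ∈ K

/-- The link `Lk(v)` of a vertex `v`: all simplices `s` of `K` with `v ∉ s` and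
`s ∪ {v} ∈ K`. -/
noncomputable def linkK [DecidableEq V] (K : Finset (Finset V)) (v : V) :
    Finset (Finset V) :=
  K.filter fun s => v ∉ s ∧ insert v s ∈ K

/-- `τ_v : C^{m}(K) → C^{m-1}(Lk(v))`: `(τ_v f)(s) = f([v,s])` for `s` an oriented
simplex of the link `Lk(v)`. -/
noncomputable def tau [DecidableEq V] [Fintype V] (K : Finset (Finset V)) (v : V) {m : ℕ}
    (f : (Fin (m + 1) → V) → ℝ) : (Fin m → V) → ℝ :=
  fun s => if Allowed (linkK K v) s then f (Fin.cons v s) else 0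

/-- `c` is an eigenvalue of the Laplace operator acting on `(m-1)`-cochains of `K`. -/
def IsEigen [DecidableEq V] [Fintype V] (K : Finset (Finset V)) (n m : ℕ) (c : ℝ) : Prop :=
  ∃ f : (Fin m → V) → ℝ, f ≠ 0 ∧ IsCochain K m f ∧ lap K n f = c • f

open Equiv Equiv.Perm

open scoped Nat

section Tuples

variable {K : Finset (Finset V)} {m : ℕ}

lemma sum_comp_perm [Fintype V] {M : Type*} [AddCommMonoid M] (σ : Perm (Fin m))
    (G : (Fin m → V) → M) : ∑ v : Fin m → V, G (v ∘ σ) = ∑ v, G v :=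
  Fintype.sum_equiv (σ.symm.arrowCongr (Equiv.refl V)) _ _ fun _ => rfl

lemma sum_tuple_eq_sum_cons [Fintype V] {M : Type*} [AddCommMonoid M]
    (G : (Fin (m + 1) → V) → M) : ∑ t, G t = ∑ x : V, ∑ s : Fin m → V, G (Fin.cons x s) := by
  rw [← Fintype.sum_prod_type']
  exact (Fintype.sum_equiv (Fin.consEquiv fun _ => V) _ _ fun _ => rfl).symm

variable [DecidableEq V]

lemma image_univ_comp_perm (v : Fin m → V) (σ : Perm (Fin m)) :
    image (v ∘ σ) univ = image v univ := by
  rw [← image_image, image_univ_equiv]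

lemma image_univ_cons (x : V) (s : Fin m → V) :
    image (Fin.cons x s : Fin (m + 1) → V) univ = insert x (image s univ) := by
  ext y
  simp [Fin.exists_fin_succ, eq_comm]

variable [Fintype V]

lemma allowed_comp_perm_iff (σ : Perm (Fin m)) (v : Fin m → V) :
    Allowed K (v ∘ σ) ↔ Allowed K v := by
  rw [Allowed, Allowed, image_univ_comp_perm, σ.injective_comp]

lemma Allowed.comp_injective (hK : IsComplex K) {v : Fin m → V} (hv : Allowed K v) {m' : ℕ}
    (hm' : 0 < m') {g : Fin m' → Fin m} (hg : Function.Injective g) : Allowed K (v ∘ g) := by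
  refine ⟨hv.1.comp hg, hK.2 _ hv.2 _ ?_ ⟨v (g ⟨0, hm'⟩), mem_image_of_mem _ (mem_univ _)⟩⟩
  rw [← image_image]
  exact image_subset_image (subset_univ _)

lemma Allowed.tail (hK : IsComplex K) (hm : 0 < m) {x : V} {s : Fin m → V}
    (h : Allowed K (Fin.cons x s)) : Allowed K s := by
  simpa using h.comp_injective hK hm (Fin.succ_injective m)

lemma allowed_cons_iff {x : V} {s : Fin m → V} :
    Allowed K (Fin.cons x s) ↔
      Function.Injective s ∧ x ∉ image s univ ∧ insert x (image s univ) ∈ K := by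
  simp only [Allowed, Fin.cons_injective_iff, image_univ_cons, Set.mem_range, mem_image,
    mem_univ, true_and]
  tauto

lemma allowed_linkK_iff (hK : IsComplex K) (hm : 0 < m) {u : V} {s : Fin m → V} :
    Allowed (linkK K u) s ↔ Allowed K (Fin.cons u s) := by
  rw [allowed_cons_iff, Allowed, linkK, mem_filter]
  constructor
  · rintro ⟨hs, -, hu, hins⟩
    exact ⟨hs, hu, hins⟩
  · rintro ⟨hs, hu, hins⟩
    refine ⟨hs, hK.2 _ hins _ (subset_insert _ _) ?_, hu, hins⟩
    exact ⟨s ⟨0, hm⟩, mem_image_of_mem _ (mem_univ _)⟩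

end Tuples

section Weights

variable [DecidableEq V] {K : Finset (Finset V)} {n : ℕ}

lemma wt_pos (hpure : IsPureDim K n) {s : Finset V} (hs : s ∈ K) : 0 < wt K n s := by
  obtain ⟨t, ht, hst, hcard⟩ := hpure.2 s hs
  exact card_pos.2 ⟨t, mem_filter.2 ⟨ht, hst, hcard⟩⟩

lemma wt_eq_zero_of_notMem (hK : IsComplex K) {s : Finset V} (hs : s.Nonempty) (h : s ∉ K) :
    wt K n s = 0 :=
  card_eq_zero.2 <| filter_eq_empty_iff.2 fun t ht hst => h (hK.2 t ht s hst.1 hs)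

lemma sum_wt_insert [Fintype V] (K : Finset (Finset V)) (n : ℕ) (s : Finset V) :
    ∑ x ∈ sᶜ, wt K n (insert x s) = (n + 1 - #s) * wt K n s := by
  set T := K.filter fun t => s ⊆ t ∧ t.card = n + 1
  have hfiber : ∀ x, wt K n (insert x s) = #{t ∈ T | x ∈ t} := by
    intro x
    rw [wt, filter_filter]
    congr 1
    exact filter_congr fun t _ => by rw [insert_subset_iff]; tauto
  calc ∑ x ∈ sᶜ, wt K n (insert x s) = ∑ t ∈ T, #(sᶜ ∩ t) := by
        simp_rw [hfiber, ← filter_mem_eq_inter, card_eq_sum_ones, sum_filter]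
        exact sum_comm
    _ = ∑ _t ∈ T, (n + 1 - #s) := by
        refine sum_congr rfl fun t ht => ?_
        rw [mem_filter] at ht
        rw [inter_comm, ← sdiff_eq_inter_compl, card_sdiff_of_subset ht.2.1, ht.2.2]
    _ = (n + 1 - #s) * wt K n s := by rw [sum_const, smul_eq_mul, mul_comm, wt]

lemma sum_wt_allowed_cons [Fintype V] (hK : IsComplex K) {m : ℕ} (hm : m ≤ n + 1)
    {s : Fin m → V} (hs : Allowed K s) :
    ∑ x : V, (if Allowed K (Fin.cons x s) then (wt K n (image (Fin.cons x s) univ) : ℝ) else 0)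
      = ((n : ℝ) + 1 - m) * wt K n (image s univ) := by
  have hterm : ∀ x : V,
      (if Allowed K (Fin.cons x s) then (wt K n (image (Fin.cons x s) univ) : ℝ) else 0)
        = if x ∈ (image s univ)ᶜ then (wt K n (insert x (image s univ)) : ℝ) else 0 := by
    intro x
    by_cases hins : insert x (image s univ) ∈ K
    · simp [allowed_cons_iff, image_univ_cons, hs.1, hins]
    · simp [allowed_cons_iff, hins,
        wt_eq_zero_of_notMem hK (insert_nonempty _ _) hins]
  rw [sum_congr rfl fun x _ => hterm x, sum_ite_mem, univ_inter, ← Nat.cast_sum, sum_wt_insert,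
    card_image_of_injective _ hs.1, card_univ, Fintype.card_fin, Nat.cast_mul,
    Nat.cast_sub hm]
  push_cast
  ring

lemma wt_linkK (hK : IsComplex K) (hn : 1 ≤ n) {u : V} {s : Finset V} (hus : u ∉ s) :
    wt (linkK K u) (n - 1) s = wt K n (insert u s) := by
  rw [wt, wt, Nat.sub_add_cancel hn]
  refine card_nbij' (insert u) (fun t => t.erase u) ?_ ?_ ?_ ?_
  · intro t ht
    simp only [coe_filter, linkK, mem_filter, Set.mem_ofPred_eq] at ht ⊢
    obtain ⟨⟨-, hut, hins⟩, hst, hcard⟩ := ht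
    exact ⟨hins, insert_subset_insert _ hst, by rw [card_insert_of_notMem hut, hcard]⟩
  · intro t ht
    simp only [coe_filter, linkK, mem_filter, Set.mem_ofPred_eq] at ht ⊢
    obtain ⟨htK, hst, hcard⟩ := ht
    have hut : u ∈ t := hst (mem_insert_self u s)
    have hcard' : #(t.erase u) = n := by rw [card_erase_of_mem hut, hcard]; rfl
    refine ⟨⟨hK.2 t htK _ (erase_subset u t) (card_pos.1 (by omega)), notMem_erase u t,
      by rwa [insert_erase hut]⟩, ?_, hcard'⟩
    exact fun y hy => mem_erase.2 ⟨fun h => hus (h ▸ hy), hst (mem_insert_of_mem hy)⟩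
  · intro t ht
    simp only [coe_filter, linkK, mem_filter, Set.mem_ofPred_eq] at ht
    exact erase_insert ht.1.2.1
  · intro t ht
    simp only [coe_filter, Set.mem_ofPred_eq] at ht
    exact insert_erase (ht.2.1 (mem_insert_self u s))

lemma wt_linkK_pos (hK : IsComplex K) (hpure : IsPureDim K n) (hn : 1 ≤ n) (u : V) :
    ∀ s ∈ linkK K u, 0 < wt (linkK K u) (n - 1) s := by
  intro s hs
  rw [wt_linkK hK hn (mem_filter.1 hs).2.1]
  exact wt_pos hpure (mem_filter.1 hs).2.2

end Weights

section Links

variable [DecidableEq V] {K : Finset (Finset V)}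

lemma linkK_isComplex (hK : IsComplex K) (u : V) : IsComplex (linkK K u) := by
  refine ⟨fun s hs => hK.1 s (mem_filter.1 hs).1, fun s hs t hts ht => ?_⟩
  rw [linkK, mem_filter] at hs ⊢
  obtain ⟨hsK, hus, hins⟩ := hs
  exact ⟨hK.2 s hsK t hts ht, fun hut => hus (hts hut),
    hK.2 _ hins _ (insert_subset_insert _ hts) (insert_nonempty _ _)⟩

lemma linkK_eq_empty [Fintype V] (hK : IsComplex K) {u : V} (hu : u ∉ verts K) :
    linkK K u = ∅ := by
  refine eq_empty_iff_forall_notMem.2 fun s hs => hu ?_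
  rw [linkK, mem_filter] at hs
  rw [verts, mem_filter]
  exact ⟨mem_univ u, hK.2 _ hs.2.2 {u} (by simp) (singleton_nonempty u)⟩

lemma sum_verts_innerC_linkK [Fintype V] (hK : IsComplex K) (n m : ℕ)
    (f g : V → (Fin m → V) → ℝ) :
    ∑ u ∈ verts K, innerC (linkK K u) n m (f u) (g u)
      = ∑ u, innerC (linkK K u) n m (f u) (g u) :=
  sum_subset (subset_univ _) fun u _ hu => by simp [innerC, linkK_eq_empty hK hu, wt]

end Links

section Alternating

variable {m : ℕ}

noncomputable def faceSum (f : (Fin m → V) → ℝ) (v : Fin (m + 1) → V) : ℝ :=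
  ∑ j : Fin (m + 1), (-1 : ℝ) ^ (j : ℕ) * f (v ∘ Fin.succAbove j)

lemma cast_sign_mul_self (σ : Perm (Fin m)) : ((sign σ : ℤ) : ℝ) * (sign σ : ℤ) = 1 := by
  rw [← Int.cast_mul, ← Units.val_mul, Int.units_mul_self, Units.val_one, Int.cast_one]

variable {f : (Fin m → V) → ℝ}
  (hf : ∀ (σ : Perm (Fin m)) (v : Fin m → V), f (v ∘ σ) = ((sign σ : ℤ) : ℝ) * f v)
include hf

lemma sign_mul_decomposeFin_symm (v : Fin (m + 1) → V) (j : Fin (m + 1)) (e : Perm (Fin m)) :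
    ((sign (decomposeFin.symm (j, e)) : ℤ) : ℝ) * f (v ∘ decomposeFin.symm (j, e) ∘ Fin.succ)
      = (-1) ^ (j : ℕ) * f (v ∘ Fin.succAbove j) := by
  have hcomp : v ∘ decomposeFin.symm (j, e) ∘ Fin.succ = (v ∘ swap 0 j ∘ Fin.succ) ∘ e := by
    funext k
    simp [decomposeFin_symm_apply_succ]
  rw [hcomp, hf, decomposeFin.symm_sign]
  cases j using Fin.cases with
  | zero =>
    simp only [if_pos, swap_self, coe_refl, Function.id_comp, Fin.succAbove_zero, Fin.val_zero,
      pow_zero]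
    push_cast
    linear_combination f (v ∘ Fin.succ) * cast_sign_mul_self e
  | succ l =>
    have hcycle : v ∘ swap 0 l.succ ∘ Fin.succ = (v ∘ l.succ.succAbove) ∘ Fin.cycleRange l := by
      funext k
      simp
    rw [hcycle, hf, Fin.sign_cycleRange, if_neg (Fin.succ_ne_zero l), Fin.val_succ]
    push_cast
    linear_combination -(-1) ^ (l : ℕ) * f (v ∘ l.succ.succAbove) * cast_sign_mul_self e

lemma factorial_mul_faceSum (v : Fin (m + 1) → V) :
    (m ! : ℝ) * faceSum f v
      = ∑ σ : Perm (Fin (m + 1)), ((sign σ : ℤ) : ℝ) * f (v ∘ σ ∘ Fin.succ) := by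
  rw [← decomposeFin.symm.sum_comp, Fintype.sum_prod_type, faceSum, mul_sum]
  refine sum_congr rfl fun j _ => ?_
  simp only [sign_mul_decomposeFin_symm hf, sum_const, card_univ, Fintype.card_perm,
    Fintype.card_fin, nsmul_eq_mul]

lemma faceSum_comp_perm (π : Perm (Fin (m + 1))) (v : Fin (m + 1) → V) :
    faceSum f (v ∘ π) = ((sign π : ℤ) : ℝ) * faceSum f v := by
  apply mul_left_cancel₀ (Nat.cast_ne_zero.2 m.factorial_ne_zero : (m ! : ℝ) ≠ 0)
  rw [mul_left_comm, factorial_mul_faceSum hf, factorial_mul_faceSum hf, mul_sum]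
  refine Fintype.sum_equiv (Equiv.mulLeft π) _ _ fun σ => ?_
  simp only [coe_mulLeft, coe_mul, Perm.sign_mul, Units.val_mul, Int.cast_mul, Function.comp_assoc]
  linear_combination -((sign σ : ℤ) : ℝ) * f (v ∘ π ∘ σ ∘ Fin.succ) * cast_sign_mul_self π

end Alternating

section Cochains

variable [DecidableEq V] [Fintype V] {K : Finset (Finset V)} {m : ℕ}

lemma cobound_eq_ite (f : (Fin m → V) → ℝ) (v : Fin (m + 1) → V) :
    cobound K f v = if Allowed K v then faceSum f v else 0 := rfl

lemma isCochain_cobound {f : (Fin m → V) → ℝ} (hf : IsCochain K m f) :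
    IsCochain K (m + 1) (cobound K f) := by
  refine ⟨fun σ v => ?_, fun v hv => if_neg hv⟩
  simp only [cobound_eq_ite, allowed_comp_perm_iff, faceSum_comp_perm hf.1]
  split_ifs <;> simp

lemma isCochain_tau {f : (Fin (m + 1) → V) → ℝ} (hf : IsCochain K (m + 1) f) (u : V) :
    IsCochain (linkK K u) m (tau K u f) := by
  refine ⟨fun σ s => ?_, fun s hs => if_neg hs⟩
  have hcons : (Fin.cons u (s ∘ σ) : Fin (m + 1) → V) = Fin.cons u s ∘ decomposeFin.symm (0, σ) := by
    funext k
    cases k using Fin.cases <;> simp [decomposeFin_symm_apply_zero, decomposeFin_symm_apply_succ]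
  simp only [tau, allowed_comp_perm_iff, hcons, hf.1, decomposeFin.symm_sign]
  split_ifs <;> simp

end Cochains

section Adjointness

variable [DecidableEq V] [Fintype V] {K : Finset (Finset V)} {n m : ℕ}

lemma wt_mul_codiff (hK : IsComplex K) (hw : ∀ s ∈ K, 0 < wt K n s) (hm : 0 < m)
    (g : (Fin (m + 1) → V) → ℝ) (s : Fin m → V) :
    (wt K n (image s univ) : ℝ) * codiff K n g s
      = ∑ x : V, if Allowed K (Fin.cons x s) then
          (wt K n (image (Fin.cons x s) univ) : ℝ) * g (Fin.cons x s) else 0 := by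
  rw [codiff, mul_sum]
  refine sum_congr rfl fun x _ => ?_
  split_ifs with h
  · have hs : (wt K n (image s univ) : ℝ) ≠ 0 := by
      exact_mod_cast (hw _ (h.tail hK hm).2).ne'
    field_simp
  · exact mul_zero _

lemma innerC_codiff (hK : IsComplex K) (hw : ∀ s ∈ K, 0 < wt K n s) (hm : 0 < m)
    {g : (Fin (m + 1) → V) → ℝ} (hg : ∀ t, ¬ Allowed K t → g t = 0) (f : (Fin m → V) → ℝ) :
    innerC K n m (codiff K n g) f
      = (∑ t, (wt K n (image t univ) : ℝ) * g t * f (t ∘ Fin.succ)) / (m ! : ℝ) := by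
  rw [innerC, sum_tuple_eq_sum_cons, sum_comm]
  congr 1
  refine sum_congr rfl fun s _ => ?_
  rw [wt_mul_codiff hK hw hm, sum_mul]
  refine sum_congr rfl fun x _ => ?_
  split_ifs with h
  · simp
  · simp [hg _ h]

lemma sum_wt_mul_faceTerm {g : (Fin (m + 1) → V) → ℝ}
    (hg : ∀ (σ : Perm (Fin (m + 1))) v, g (v ∘ σ) = ((sign σ : ℤ) : ℝ) * g v)
    (f : (Fin m → V) → ℝ) (j : Fin (m + 1)) :
    ∑ t, (wt K n (image t univ) : ℝ) * g t * ((-1) ^ (j : ℕ) * f (t ∘ Fin.succAbove j))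
      = ∑ t, (wt K n (image t univ) : ℝ) * g t * f (t ∘ Fin.succ) := by
  conv_rhs => rw [← sum_comp_perm (Fin.cycleRange j).symm]
  refine sum_congr rfl fun t _ => ?_
  have hface : (t ∘ (Fin.cycleRange j).symm) ∘ Fin.succ = t ∘ Fin.succAbove j := by
    funext k
    simp
  rw [hface, image_univ_comp_perm, hg, sign_symm, Fin.sign_cycleRange]
  push_cast
  ring

lemma sum_wt_mul_cobound_self {f : (Fin m → V) → ℝ} (hf : IsCochain K m f) :
    ∑ t, (wt K n (image t univ) : ℝ) * cobound K f t * cobound K f t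
      = (m + 1) * ∑ t, (wt K n (image t univ) : ℝ) * cobound K f t * f (t ∘ Fin.succ) := by
  have hexpand : ∀ t : Fin (m + 1) → V,
      (wt K n (image t univ) : ℝ) * cobound K f t * cobound K f t
        = ∑ j : Fin (m + 1), (wt K n (image t univ) : ℝ) * cobound K f t
            * ((-1) ^ (j : ℕ) * f (t ∘ Fin.succAbove j)) := by
    intro t
    rw [← mul_sum]
    by_cases h : Allowed K t
    · rw [cobound_eq_ite, if_pos h, faceSum]
    · rw [cobound_eq_ite, if_neg h]
      ring
  simp_rw [hexpand]
  rw [sum_comm]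
  simp_rw [sum_wt_mul_faceTerm (isCochain_cobound hf).1]
  rw [sum_const, card_univ, Fintype.card_fin, nsmul_eq_mul]
  push_cast
  ring

lemma innerC_lap (hK : IsComplex K) (hw : ∀ s ∈ K, 0 < wt K n s) (hm : 0 < m)
    {f : (Fin m → V) → ℝ} (hf : IsCochain K m f) :
    innerC K n m (lap K n f) f
      = (∑ t, (wt K n (image t univ) : ℝ) * cobound K f t * f (t ∘ Fin.succ)) / (m ! : ℝ) :=
  innerC_codiff hK hw hm (isCochain_cobound hf).2 f

lemma innerC_cobound_self (hK : IsComplex K) (hw : ∀ s ∈ K, 0 < wt K n s) (hm : 0 < m)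
    {f : (Fin m → V) → ℝ} (hf : IsCochain K m f) :
    innerC K n (m + 1) (cobound K f) (cobound K f) = innerC K n m (lap K n f) f := by
  rw [innerC, sum_wt_mul_cobound_self hf, innerC_lap hK hw hm hf, Nat.factorial_succ]
  push_cast
  field_simp

end Adjointness

section Localization

variable [DecidableEq V] [Fintype V] {K : Finset (Finset V)} {n m : ℕ}

lemma wt_linkK_tuple (hK : IsComplex K) (hn : 1 ≤ n) {u : V} {v : Fin m → V}
    (hv : Allowed (linkK K u) v) :
    wt (linkK K u) (n - 1) (image v univ) = wt K n (image (Fin.cons u v) univ) := by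
  rw [image_univ_cons]
  exact wt_linkK hK hn (mem_filter.1 hv.2).2.1

lemma cobound_tau_apply (hK : IsComplex K) (hm : 0 < m) {u : V} (f : (Fin (m + 1) → V) → ℝ)
    {v : Fin (m + 1) → V} (hv : Allowed (linkK K u) v) :
    cobound (linkK K u) (tau K u f) v = f v - cobound K f (Fin.cons u v) := by
  have hface : ∀ l : Fin (m + 1), Allowed (linkK K u) (v ∘ Fin.succAbove l) :=
    fun l => hv.comp_injective (linkK_isComplex hK u) hm Fin.succAbove_right_injective
  rw [cobound_eq_ite, if_pos hv, cobound_eq_ite, if_pos ((allowed_linkK_iff hK m.succ_pos).1 hv),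
    faceSum, faceSum, Fin.sum_univ_succ (n := m + 1)]
  have hremove : ∀ l : Fin (m + 1), Fin.removeNth l v = v ∘ l.succAbove := fun _ => rfl
  simp only [Fin.val_zero, pow_zero, one_mul, Fin.succAbove_zero, Fin.cons_comp_succ,
    Fin.cons_comp_succ_succAbove, hremove, Fin.val_succ, pow_succ, tau, if_pos (hface _),
    mul_neg_one, neg_mul, sum_neg_distrib]
  ring

lemma wt_mul_cobound_tau_self (hK : IsComplex K) (hn : 1 ≤ n) (hm : 0 < m) (u : V)
    (f : (Fin (m + 1) → V) → ℝ) (v : Fin (m + 1) → V) :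
    (wt (linkK K u) (n - 1) (image v univ) : ℝ) * cobound (linkK K u) (tau K u f) v
        * cobound (linkK K u) (tau K u f) v
      = if Allowed K (Fin.cons u v) then
          (wt K n (image (Fin.cons u v) univ) : ℝ) * (f v - cobound K f (Fin.cons u v)) ^ 2
        else 0 := by
  by_cases h : Allowed (linkK K u) v
  · rw [if_pos ((allowed_linkK_iff hK m.succ_pos).1 h), cobound_tau_apply hK hm f h,
      wt_linkK_tuple hK hn h]
    ring
  · rw [if_neg (mt (allowed_linkK_iff hK m.succ_pos).2 h), cobound_eq_ite, if_neg h]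
    ring

lemma sum_allowed_wt_mul_tail_sq (hK : IsComplex K) (hm : m ≤ n + 1)
    {f : (Fin m → V) → ℝ} (hf : IsCochain K m f) :
    ∑ t : Fin (m + 1) → V,
        (if Allowed K t then (wt K n (image t univ) : ℝ) * f (t ∘ Fin.succ) ^ 2 else 0)
      = ((n : ℝ) + 1 - m) * ∑ s, (wt K n (image s univ) : ℝ) * f s * f s := by
  rw [sum_tuple_eq_sum_cons, sum_comm, mul_sum]
  refine sum_congr rfl fun s _ => ?_
  simp only [Fin.cons_comp_succ]
  by_cases hs : Allowed K s
  · calc ∑ x, (if Allowed K (Fin.cons x s) then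
            (wt K n (image (Fin.cons x s) univ) : ℝ) * f s ^ 2 else 0)
        = (∑ x, if Allowed K (Fin.cons x s) then
            (wt K n (image (Fin.cons x s) univ) : ℝ) else 0) * f s ^ 2 := by
          rw [sum_mul]
          exact sum_congr rfl fun x _ => by split_ifs <;> ring
      _ = ((n : ℝ) + 1 - m) * ((wt K n (image s univ) : ℝ) * f s * f s) := by
          rw [sum_wt_allowed_cons hK hm hs]
          ring
  · simp [hf.2 s hs]

lemma sum_allowed_wt_mul_sq_sub_cobound (hK : IsComplex K) (hm : m ≤ n + 1)
    {f : (Fin m → V) → ℝ} (hf : IsCochain K m f) :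
    ∑ t : Fin (m + 1) → V, (if Allowed K t then
        (wt K n (image t univ) : ℝ) * (f (t ∘ Fin.succ) - cobound K f t) ^ 2 else 0)
      = ((n : ℝ) + 1 - m) * ∑ s, (wt K n (image s univ) : ℝ) * f s * f s
        + (m - 1) * ∑ t, (wt K n (image t univ) : ℝ) * cobound K f t * f (t ∘ Fin.succ) := by
  have hsplit : ∀ t : Fin (m + 1) → V, (if Allowed K t then
      (wt K n (image t univ) : ℝ) * (f (t ∘ Fin.succ) - cobound K f t) ^ 2 else 0)
        = (if Allowed K t then (wt K n (image t univ) : ℝ) * f (t ∘ Fin.succ) ^ 2 else 0)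
          - 2 * ((wt K n (image t univ) : ℝ) * cobound K f t * f (t ∘ Fin.succ))
          + (wt K n (image t univ) : ℝ) * cobound K f t * cobound K f t := by
    intro t
    by_cases h : Allowed K t
    · simp only [if_pos h]
      ring
    · simp only [if_neg h, cobound_eq_ite]
      ring
  simp only [hsplit, sum_add_distrib, sum_sub_distrib, ← mul_sum,
    sum_allowed_wt_mul_tail_sq hK hm hf, sum_wt_mul_cobound_self hf]
  ring

lemma sum_innerC_tau_self (hK : IsComplex K) (hn : 1 ≤ n) (hm : 0 < m)
    {f : (Fin (m + 1) → V) → ℝ} (hf : IsCochain K (m + 1) f) :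
    ∑ u, innerC (linkK K u) (n - 1) m (tau K u f) (tau K u f)
      = (m + 1) * innerC K n (m + 1) f f := by
  have hterm : ∀ u s, (wt (linkK K u) (n - 1) (image s univ) : ℝ) * tau K u f s * tau K u f s
      = wt K n (image (Fin.cons u s) univ) * f (Fin.cons u s) * f (Fin.cons u s) := by
    intro u s
    by_cases h : Allowed (linkK K u) s
    · rw [tau, if_pos h, wt_linkK_tuple hK hn h]
    · rw [tau, if_neg h, hf.2 _ (mt (allowed_linkK_iff hK hm).2 h)]
      ring
  simp only [innerC, ← sum_div, hterm]
  rw [← sum_tuple_eq_sum_cons (fun t => (wt K n (image t univ) : ℝ) * f t * f t),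
    Nat.factorial_succ]
  push_cast
  field_simp

lemma sum_innerC_lap_tau (hK : IsComplex K) (hpure : IsPureDim K n) (hm : 0 < m)
    (hmn : m + 1 ≤ n) {f : (Fin (m + 1) → V) → ℝ} (hf : IsCochain K (m + 1) f) :
    ∑ u, innerC (linkK K u) (n - 1) m (lap (linkK K u) (n - 1) (tau K u f)) (tau K u f)
      = ((n : ℝ) - m) * innerC K n (m + 1) f f + m * innerC K n (m + 1) (lap K n f) f := by
  have hn : 1 ≤ n := by omega
  calc ∑ u, innerC (linkK K u) (n - 1) m (lap (linkK K u) (n - 1) (tau K u f)) (tau K u f)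
      = ∑ u, innerC (linkK K u) (n - 1) (m + 1) (cobound (linkK K u) (tau K u f))
          (cobound (linkK K u) (tau K u f)) :=
        sum_congr rfl fun u _ => (innerC_cobound_self (linkK_isComplex hK u)
          (wt_linkK_pos hK hpure hn u) hm (isCochain_tau hf u)).symm
    _ = (∑ t : Fin (m + 2) → V, if Allowed K t then
          (wt K n (image t univ) : ℝ) * (f (t ∘ Fin.succ) - cobound K f t) ^ 2 else 0)
          / ((m + 1)! : ℝ) := by
        simp only [innerC, ← sum_div, wt_mul_cobound_tau_self hK hn hm]
        rw [sum_tuple_eq_sum_cons]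
        simp only [Fin.cons_comp_succ]
    _ = ((n : ℝ) - m) * innerC K n (m + 1) f f + m * innerC K n (m + 1) (lap K n f) f := by
        rw [sum_allowed_wt_mul_sq_sub_cobound hK (by omega) hf, innerC,
          innerC_lap hK (fun s hs => wt_pos hpure hs) m.succ_pos hf]
        push_cast
        ring

end Localization

section Rayleigh

variable [DecidableEq V] [Fintype V] {K : Finset (Finset V)} {n m : ℕ}

lemma innerC_smul_left (c : ℝ) (f g : (Fin m → V) → ℝ) :
    innerC K n m (c • f) g = c * innerC K n m f g := by
  simp only [innerC, Pi.smul_apply, smul_eq_mul, mul_div_assoc', mul_sum]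
  congr 1
  exact sum_congr rfl fun v _ => by ring

lemma innerC_self_pos (hpure : IsPureDim K n) {f : (Fin m → V) → ℝ} (hf : IsCochain K m f)
    (hf0 : f ≠ 0) : 0 < innerC K n m f f := by
  obtain ⟨v, hv⟩ := Function.ne_iff.1 hf0
  have hwv : 0 < wt K n (image v univ) := wt_pos hpure (not_not.1 (mt (hf.2 v) hv)).2
  refine div_pos (sum_pos' (fun t _ => ?_) ⟨v, mem_univ v, ?_⟩) (by positivity)
  · rw [mul_assoc]
    exact mul_nonneg (Nat.cast_nonneg _) (mul_self_nonneg _)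
  · rw [mul_assoc]
    exact mul_pos (Nat.cast_pos.2 hwv) (mul_self_pos.2 hv)

end Rayleigh

theorem fundamental_inequality_upper_general
    [Fintype V] [DecidableEq V] (K : Finset (Finset V)) (n i : ℕ)
    (hcplx : IsComplex K) (hpure : IsPureDim K n) (hi1 : 1 ≤ i) (hin : i + 1 ≤ n)
    (lam : ℝ)
    (hlam : ∀ u ∈ verts K, ∀ g : (Fin i → V) → ℝ, IsCochain (linkK K u) i g →
      innerC (linkK K u) (n - 1) i (lap (linkK K u) (n - 1) g) g
        ≤ lam * innerC (linkK K u) (n - 1) i g g) :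
    (∀ f : (Fin (i + 1) → V) → ℝ, IsCochain K (i + 1) f →
      (i : ℝ) * innerC K n (i + 1) (lap K n f) f
        ≤ (((i : ℝ) + 1) * lam - ((n : ℝ) - (i : ℝ))) * innerC K n (i + 1) f f)
    ∧ ∀ c : ℝ, IsEigen K n (i + 1) c →
        (i : ℝ) * c ≤ ((i : ℝ) + 1) * lam - ((n : ℝ) - (i : ℝ)) := by
  have rayleigh_bound : ∀ f : (Fin (i + 1) → V) → ℝ, IsCochain K (i + 1) f →
      (i : ℝ) * innerC K n (i + 1) (lap K n f) f
        ≤ (((i : ℝ) + 1) * lam - ((n : ℝ) - (i : ℝ))) * innerC K n (i + 1) f f := by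
    intro f hf
    have hsum := sum_le_sum fun u hu => hlam u hu (tau K u f) (isCochain_tau hf u)
    rw [← mul_sum, sum_verts_innerC_linkK hcplx, sum_verts_innerC_linkK hcplx,
      sum_innerC_lap_tau hcplx hpure hi1 hin hf, sum_innerC_tau_self hcplx (by omega) hi1 hf]
      at hsum
    linarith
  refine ⟨rayleigh_bound, ?_⟩
  rintro c ⟨f, hf0, hf, hfc⟩
  have hbound := rayleigh_bound f hf
  rw [hfc, innerC_smul_left, ← mul_assoc] at hbound
  exact le_of_mul_le_mul_right hbound (innerC_self_pos hpure hf hf0)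

/-- Fundamental Inequality, upper bound: if `λ > 0` bounds all the local
Rayleigh quotients on the links, then `i·(Δf,f) ≤ ((i+1)·λ - (n-i))·(f,f)` for every
`f ∈ C^i(X)`; in particular every eigenvalue `c` of `Δ` on `C^i(X)` satisfies
`i·c ≤ (i+1)·λ - (n-i)`. -/
theorem fundamental_inequality_upper
    [Fintype V] [DecidableEq V] (K : Finset (Finset V)) (n i : ℕ)
    (hcplx : IsComplex K) (hpure : IsPureDim K n) (hi1 : 1 ≤ i) (hin : i + 1 ≤ n)
    (lam : ℝ) (hlampos : 0 < lam)
    (hlam : ∀ u ∈ verts K, ∀ g : (Fin i → V) → ℝ, IsCochain (linkK K u) i g →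
      innerC (linkK K u) (n - 1) i (lap (linkK K u) (n - 1) g) g
        ≤ lam * innerC (linkK K u) (n - 1) i g g) :
    (∀ f : (Fin (i + 1) → V) → ℝ, IsCochain K (i + 1) f →
      (i : ℝ) * innerC K n (i + 1) (lap K n f) f
        ≤ (((i : ℝ) + 1) * lam - ((n : ℝ) - (i : ℝ))) * innerC K n (i + 1) f f)
    ∧ ∀ c : ℝ, IsEigen K n (i + 1) c →
        (i : ℝ) * c ≤ ((i : ℝ) + 1) * lam - ((n : ℝ) - (i : ℝ)) :=
  fundamental_inequality_upper_general K n i hcplx hpure hi1 hin lam hlam
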